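/- arXiv:1512.01573 — 2 statements merged into one kernel-verified Lean document; each statement's English description precedes it below -/
import Mathlib

section
/- Let f : F_2^n → F_2^n be a Boolean network. If f has a cyclic attractor (in particular, if f has no fixed point), then the global interaction graph G(f) has a negative cycle. -/
/-- States of a Boolean network on `n` components: `F_2^n`. -/
abbrev St (n : ℕ) := Fin n → ZMod 2

/-- The unit vector `e^i`. -/
def uv {n : ℕ} (i : Fin n) : St n := fun j => if j = i then 1 else 0

/-- There is an edge from `j` to `i` in the local interaction graph `G(f)(x)`,
i.e. `∂_j f_i (x) = 1`. -/
def hasEdge {n : ℕ} (f : St n → St n) (x : St n) (j i : Fin n) : Prop :=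
  f (x + uv j) i ≠ f x i

/-- `(j,i)` is a positive edge of `G(f)(x)`. -/
def edgePos {n : ℕ} (f : St n → St n) (x : St n) (j i : Fin n) : Prop :=
  hasEdge f x j i ∧ x j = f x i

/-- `(j,i)` is a negative edge of `G(f)(x)`. -/
def edgeNeg {n : ℕ} (f : St n → St n) (x : St n) (j i : Fin n) : Prop :=
  hasEdge f x j i ∧ x j ≠ f x i

/-- The local interaction graph `G(f)(x)` has a negative (elementary, directed) cycle:
a cyclic sequence of pairwise distinct vertices, each consecutive pair being an edge of
`G(f)(x)`, with an odd number of negative edges. -/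
def hasNegCycleAt {n : ℕ} (f : St n → St n) (x : St n) : Prop :=
  ∃ (m : ℕ) (v : Fin (m + 1) → Fin n), Function.Injective v ∧
    (∀ k, hasEdge f x (v k) (v (k + 1))) ∧
    Odd (Nat.card {k : Fin (m + 1) // edgeNeg f x (v k) (v (k + 1))})

/-- `f` is an and-net: each coordinate function is a product of literals. -/
def IsAndNet {n : ℕ} (f : St n → St n) : Prop :=
  ∀ i : Fin n, ∃ P N : Finset (Fin n), Disjoint P N ∧
    ∀ x : St n, f x i = (∏ j ∈ P, x j) * ∏ j ∈ N, (x j + 1)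

/-- `(j,i)` is a positive edge of the global interaction graph `G(f)`. -/
def gEdgePos {n : ℕ} (f : St n → St n) (j i : Fin n) : Prop := ∃ x, edgePos f x j i

/-- `(j,i)` is a negative edge of the global interaction graph `G(f)`. -/
def gEdgeNeg {n : ℕ} (f : St n → St n) (j i : Fin n) : Prop := ∃ x, edgeNeg f x j i

/-- `(j,i)` is an edge of the global interaction graph `G(f)`. -/
def gEdge {n : ℕ} (f : St n → St n) (j i : Fin n) : Prop := gEdgePos f j i ∨ gEdgeNeg f j i

/-- Reachability in the asynchronous dynamics `Γ(f)`. -/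
def Reach {n : ℕ} (f : St n → St n) : St n → St n → Prop :=
  Relation.ReflTransGen (fun x y => ∃ i, f x i ≠ x i ∧ y = x + uv i)

/-- `A` is a cyclic attractor of `f`: a nonempty terminal strongly connected component
of `Γ(f)` (nonempty, closed under the moves of `Γ(f)`, strongly connected) which is not
a singleton (equivalently, does not consist of a fixed point). -/
def IsCyclicAttractor {n : ℕ} (f : St n → St n) (A : Set (St n)) : Prop :=
  A.Nonempty ∧
  (∀ x ∈ A, ∀ i, f x i ≠ x i → x + uv i ∈ A) ∧
  (∀ x ∈ A, ∀ y ∈ A, Reach f x y) ∧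
  ¬ ∃ a, A = {a}

/-!
Suppose `G(f)` has no negative cycle. Freezing the coordinates that are constant on the attractor
`A` only deletes edges of `G(f)`; afterwards pick a coordinate `v` that varies on `A` and lies in an
initial strongly connected component `S` of the interaction graph. Without negative cycles `S` is
balanced, so a switching `x ↦ x + σ` makes every edge entering `S` positive. The subnetwork on `S`
is then monotone, hence from any state of `A` it reaches a state where `S` is fixed; as `S` has no
inputs from outside, its coordinates never move again, contradicting that `v` varies on the
strongly connected set `A`.
-/

lemma zmod_two_ne_iff {a b : ZMod 2} : a ≠ b ↔ a + 1 = b := by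
  revert a b; decide

lemma zmod_two_eq_zero_of_ne_one {a : ZMod 2} (h : a ≠ 1) : a = 0 := by
  revert a; decide

lemma zmod_two_eq_one_of_ne_zero {a : ZMod 2} (h : a ≠ 0) : a = 1 := by
  revert a; decide

lemma exists_initial_ancestor {β : Type*} [Finite β] (E : β → β → Prop) (u : β) :
    ∃ v, Relation.ReflTransGen E v u ∧
      ∀ w, Relation.ReflTransGen E w v → Relation.ReflTransGen E v w := by
  classical
  have := Fintype.ofFinite β
  let anc : β → Finset β := fun x => Finset.univ.filter (Relation.ReflTransGen E · x)
  obtain ⟨v, hv, hmin⟩ := (anc u).exists_min_image (fun x => (anc x).card)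
    ⟨u, by simpa [anc] using Relation.ReflTransGen.refl⟩
  simp only [anc, Finset.mem_filter, Finset.mem_univ, true_and] at hv hmin
  refine ⟨v, hv, fun w hwv => ?_⟩
  have hsub : anc w ⊆ anc v := fun x hx => by
    simp only [anc, Finset.mem_filter, Finset.mem_univ, true_and] at hx ⊢
    exact hx.trans hwv
  have hvw : v ∈ anc w := Finset.eq_of_subset_of_card_le hsub (hmin w (hwv.trans hv)) ▸ by
    simpa [anc] using Relation.ReflTransGen.refl
  simpa [anc] using hvw

namespace SignedDigraph

open Finset Relation

variable {α : Type*}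

/-- A signed digraph is encoded as `G u w s`: there is an edge `u → w` of sign `(-1)^s`. -/
def HasOddCycle (G : α → α → ZMod 2 → Prop) : Prop :=
  ∃ (m : ℕ) (v : Fin (m + 1) → α) (s : Fin (m + 1) → ZMod 2),
    Function.Injective v ∧ (∀ k, G (v k) (v (k + 1)) (s k)) ∧ ∑ k, s k = 1

def IsClosedWalk (G : α → α → ZMod 2 → Prop) (L : ℕ) (c : ℕ → α) (s : ℕ → ZMod 2) : Prop :=
  (∀ k < L, G (c k) (c (k + 1)) (s k)) ∧ c L = c 0

def Adj (G : α → α → ZMod 2 → Prop) (u w : α) : Prop := ∃ s, G u w s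

variable {G : α → α → ZMod 2 → Prop}

lemma HasOddCycle.mono {G' : α → α → ZMod 2 → Prop} (h : HasOddCycle G)
    (hGG' : ∀ u w s, G u w s → G' u w s) : HasOddCycle G' := by
  obtain ⟨m, v, s, hv, hedge, hodd⟩ := h
  exact ⟨m, v, s, hv, fun k => hGG' _ _ _ (hedge k), hodd⟩

namespace IsClosedWalk

variable {L : ℕ} {c : ℕ → α} {s : ℕ → ZMod 2}

lemma hasOddCycle_of_injOn (hc : IsClosedWalk G L c s) (hinj : Set.InjOn c (Set.Iio L))
    (hodd : ∑ k ∈ range L, s k = 1) : HasOddCycle G := by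
  obtain ⟨m, rfl⟩ : ∃ m, L = m + 1 :=
    Nat.exists_eq_succ_of_ne_zero (by rintro rfl; simp at hodd)
  refine ⟨m, fun k => c k, fun k => s k, fun k l hkl => Fin.ext (hinj k.isLt l.isLt hkl),
    fun k => ?_, by rwa [Fin.sum_univ_eq_sum_range (fun k => s k)]⟩
  show G (c k) (c ↑(k + 1)) (s k)
  rw [Fin.val_add_one]
  split_ifs with hk
  · subst hk
    simpa [← hc.2] using hc.1 m (by omega)
  · exact hc.1 k (by omega)

lemma segment (hc : IsClosedWalk G L c s) {p q : ℕ} (hpq : p < q) (hqL : q < L)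
    (heq : c p = c q) : IsClosedWalk G (q - p) (fun k => c (p + k)) (fun k => s (p + k)) :=
  ⟨fun k hk => by simpa [add_assoc] using hc.1 (p + k) (by omega), by
    simp [Nat.add_sub_cancel' hpq.le, heq]⟩

/-- The closed walk obtained by cutting out the segment between two visits `p < q` of the same
vertex. -/
lemma bypass (hc : IsClosedWalk G L c s) {p q : ℕ} (hpq : p < q) (hqL : q < L)
    (heq : c p = c q) :
    IsClosedWalk G (L - (q - p)) (fun k => if k ≤ p then c k else c (k + (q - p)))
      (fun k => if k < p then s k else s (k + (q - p))) := by
  refine ⟨fun k hk => ?_, ?_⟩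
  · rcases lt_trichotomy k p with hkp | rfl | hkp
    · simpa [hkp.le, Nat.succ_le_of_lt hkp, hkp] using hc.1 k (by omega)
    · have hq : k + 1 + (q - k) = q + 1 := by omega
      simpa [hq, Nat.add_sub_cancel' hpq.le, heq] using hc.1 q hqL
    · have hk : k + 1 + (q - p) = k + (q - p) + 1 := by omega
      simpa [hkp.not_ge, hkp.not_gt, (hkp.trans (Nat.lt_succ_self k)).not_ge, hk] using
        hc.1 (k + (q - p)) (by omega)
  · simpa [show ¬ L - (q - p) ≤ p by omega, Nat.sub_add_cancel (show q - p ≤ L by omega)]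
      using hc.2

end IsClosedWalk

lemma sum_segment_add_sum_bypass (s : ℕ → ZMod 2) {L p q : ℕ} (hpq : p < q) (hqL : q < L) :
    ∑ k ∈ range (q - p), s (p + k) +
      ∑ k ∈ range (L - (q - p)), (if k < p then s k else s (k + (q - p))) =
      ∑ k ∈ range L, s k := by
  rw [← Finset.sum_range_add_sum_Ico _ (show p ≤ L - (q - p) by omega),
    Finset.sum_congr rfl (fun k hk => if_pos (Finset.mem_range.mp hk)),
    Finset.sum_congr rfl (fun k hk => if_neg (Finset.mem_Ico.mp hk).1.not_gt),
    Finset.sum_Ico_add', Nat.sub_add_cancel (show q - p ≤ L by omega),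
    Nat.add_sub_cancel' hpq.le, ← Finset.sum_Ico_eq_sum_range,
    ← Finset.sum_range_add_sum_Ico s (hpq.le.trans hqL.le),
    ← Finset.sum_Ico_consecutive s hpq.le hqL.le]
  abel

/-- At a repeated vertex the walk splits into two shorter closed walks, one of which is odd. -/
lemma IsClosedWalk.hasOddCycle {L : ℕ} {c : ℕ → α} {s : ℕ → ZMod 2}
    (hc : IsClosedWalk G L c s) (hodd : ∑ k ∈ range L, s k = 1) : HasOddCycle G := by
  induction L using Nat.strong_induction_on generalizing c s with
  | _ L ih =>
  by_cases hinj : Set.InjOn c (Set.Iio L)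
  · exact hc.hasOddCycle_of_injOn hinj hodd
  obtain ⟨p, q, hpq, hqL, heq⟩ : ∃ p q, p < q ∧ q < L ∧ c p = c q := by
    simp only [Set.InjOn, not_forall] at hinj
    obtain ⟨a, ha, b, hb, hab, hne⟩ := hinj
    rcases lt_or_gt_of_ne hne with h | h
    · exact ⟨a, b, h, hb, hab⟩
    · exact ⟨b, a, h, ha, hab.symm⟩
  have hsum := sum_segment_add_sum_bypass s hpq hqL
  rw [hodd] at hsum
  have hsplit : ∀ a b : ZMod 2, a + b = 1 → a = 1 ∨ b = 1 := by decide
  rcases hsplit _ _ hsum with h | h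
  · exact ih _ (by omega) (hc.segment hpq hqL heq) h
  · exact ih _ (by omega) (hc.bypass hpq hqL heq) h

/-- The parity double cover: `(v, 0)` reaches `(v, 1)` iff some closed walk through `v` is odd. -/
def doubleCover (G : α → α → ZMod 2 → Prop) (x y : α × ZMod 2) : Prop := G x.1 y.1 (y.2 - x.2)

lemma exists_walk_of_reflTransGen_doubleCover {a : α} {y : α × ZMod 2}
    (h : ReflTransGen (doubleCover G) (a, 0) y) :
    ∃ (L : ℕ) (c : ℕ → α) (s : ℕ → ZMod 2), (∀ k < L, G (c k) (c (k + 1)) (s k)) ∧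
      c 0 = a ∧ c L = y.1 ∧ ∑ k ∈ range L, s k = y.2 := by
  induction h with
  | refl => exact ⟨0, fun _ => a, 0, by simp, rfl, rfl, by simp⟩
  | @tail x y _ hxy ih =>
    obtain ⟨L, c, s, hwalk, h0, hL, hsum⟩ := ih
    refine ⟨L + 1, Function.update c (L + 1) y.1, Function.update s L (y.2 - x.2),
      fun k hk => ?_, by simpa using h0, by simp, ?_⟩
    · rcases Nat.lt_succ_iff_lt_or_eq.mp hk with hk | rfl
      · simpa [Function.update_of_ne (show k ≠ L + 1 by omega),
          Function.update_of_ne (show k + 1 ≠ L + 1 by omega), hk.ne] using hwalk k hk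
      · simpa [hL, doubleCover] using hxy
    · rw [Finset.sum_range_succ, Finset.sum_congr rfl fun k hk =>
        Function.update_of_ne (Finset.mem_range.mp hk).ne _ _, hsum]
      simp

lemma hasOddCycle_of_reflTransGen_doubleCover {a : α}
    (h : ReflTransGen (doubleCover G) (a, 0) (a, 1)) : HasOddCycle G := by
  obtain ⟨L, c, s, hwalk, h0, hL, hsum⟩ := exists_walk_of_reflTransGen_doubleCover h
  exact IsClosedWalk.hasOddCycle ⟨hwalk, hL.trans h0.symm⟩ hsum

lemma reflTransGen_doubleCover_add {x y : α × ZMod 2} (h : ReflTransGen (doubleCover G) x y)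
    (r : ZMod 2) : ReflTransGen (doubleCover G) (x.1, x.2 + r) (y.1, y.2 + r) :=
  h.lift (fun z => (z.1, z.2 + r)) fun _ _ huv => by simpa [doubleCover] using huv

lemma exists_reflTransGen_doubleCover {a b : α} (h : ReflTransGen (Adj G) a b) :
    ∃ p, ReflTransGen (doubleCover G) (a, 0) (b, p) := by
  induction h with
  | refl => exact ⟨0, .refl⟩
  | tail _ hbc ih =>
    obtain ⟨s, hs⟩ := hbc
    obtain ⟨p, hp⟩ := ih
    exact ⟨p + s, hp.tail (by simpa [doubleCover] using hs)⟩

/-- `σ u` is the sign of any walk from `v` to `u`; it is well defined because closed walks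
through `v` are even. -/
lemma exists_potential (hG : ¬ HasOddCycle G) (v : α)
    (hv : ∀ u, ReflTransGen (Adj G) u v → ReflTransGen (Adj G) v u) :
    ∃ σ : α → ZMod 2, ∀ j i s, ReflTransGen (Adj G) i v → G j i s → s = σ j + σ i := by
  classical
  have heven : ∀ t, ReflTransGen (doubleCover G) (v, 0) (v, t) → t = 0 := fun t ht => by
    by_contra h
    exact hG (hasOddCycle_of_reflTransGen_doubleCover (zmod_two_eq_one_of_ne_zero h ▸ ht))
  have hunique : ∀ u p q, ReflTransGen (Adj G) u v →
      ReflTransGen (doubleCover G) (v, 0) (u, p) →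
      ReflTransGen (doubleCover G) (v, 0) (u, q) → p = q := by
    intro u p q huv hp hq
    obtain ⟨r, hr⟩ := exists_reflTransGen_doubleCover huv
    have hp' := heven _ (hp.trans (by simpa using reflTransGen_doubleCover_add hr p))
    have hq' := heven _ (hq.trans (by simpa using reflTransGen_doubleCover_add hr q))
    exact add_left_cancel (hp'.trans hq'.symm)
  let σ : α → ZMod 2 := fun u => if ReflTransGen (doubleCover G) (v, 0) (u, 1) then 1 else 0
  have hσ : ∀ u, ReflTransGen (Adj G) u v → ReflTransGen (doubleCover G) (v, 0) (u, σ u) := by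
    intro u huv
    by_cases h1 : ReflTransGen (doubleCover G) (v, 0) (u, 1)
    · simp [σ, h1]
    · obtain ⟨p, hp⟩ := exists_reflTransGen_doubleCover (hv u huv)
      have hp0 : p = 0 := zmod_two_eq_zero_of_ne_one fun hp1 => h1 (hp1 ▸ hp)
      simpa [σ, h1, hp0] using hp
  refine ⟨σ, fun j i s hiv hji => ?_⟩
  have hjv : ReflTransGen (Adj G) j v := .head ⟨s, hji⟩ hiv
  have hi := (hσ j hjv).tail (c := (i, σ j + s)) (by simpa [doubleCover] using hji)
  have := hunique i _ _ hiv hi (hσ i hiv)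
  rw [← this, CharTwo.add_cancel_left]

end SignedDigraph

namespace BooleanNetwork

variable {n : ℕ}

lemma add_uv_apply (x : St n) (j i : Fin n) :
    (x + uv j) i = if i = j then x i + 1 else x i := by
  simp only [Pi.add_apply, uv]
  split_ifs <;> simp

lemma add_uv_self (x : St n) (j : Fin n) : (x + uv j) j = x j + 1 := by
  rw [add_uv_apply, if_pos rfl]

lemma add_uv_of_ne (x : St n) {i j : Fin n} (h : i ≠ j) : (x + uv j) i = x i := by
  rw [add_uv_apply, if_neg h]

lemma hammingDist_add_uv_lt {x y : St n} {j : Fin n} (h : x j ≠ y j) :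
    hammingDist (x + uv j) y < hammingDist x y := by
  have hfilter : Finset.univ.filter (fun i => (x + uv j) i ≠ y i) =
      (Finset.univ.filter fun i => x i ≠ y i).erase j := by
    ext i
    simp only [Finset.mem_filter, Finset.mem_univ, true_and, Finset.mem_erase]
    by_cases hij : i = j
    · subst hij
      rw [add_uv_self]; simpa using zmod_two_ne_iff.mp h
    · simp [add_uv_of_ne x hij, hij]
  simp only [hammingDist, hfilter]
  exact Finset.card_erase_lt_of_mem (by simpa using h)

lemma flip_induction {P : St n → Prop} (y : St n) (hy : P y)
    (step : ∀ x j, x j ≠ y j → P (x + uv j) → P x) (x : St n) : P x := by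
  induction hd : hammingDist x y using Nat.strong_induction_on generalizing x with
  | _ d ih =>
  by_cases hxy : x = y
  · exact hxy ▸ hy
  obtain ⟨j, hj⟩ := Function.ne_iff.mp hxy
  exact step x j hj (ih _ (hd ▸ hammingDist_add_uv_lt hj) _ rfl)

lemma exists_reach_of_descent (h : St n → St n) {P Q : St n → Prop} (y : St n)
    (step : ∀ x, P x → ¬ Q x → ∃ j, h x j ≠ x j ∧ x j ≠ y j ∧ P (x + uv j)) :
    ∀ x, P x → ∃ z, Reach h x z ∧ P z ∧ Q z := by
  intro x
  induction hd : hammingDist x y using Nat.strong_induction_on generalizing x with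
  | _ d ih =>
  intro hx
  by_cases hQ : Q x
  · exact ⟨x, .refl, hx, hQ⟩
  obtain ⟨j, hj, hjy, hP⟩ := step x hx hQ
  obtain ⟨z, hz, hPz, hQz⟩ := ih _ (hd ▸ hammingDist_add_uv_lt hjy) _ rfl hP
  exact ⟨z, .head ⟨j, hj, rfl⟩ hz, hPz, hQz⟩

def StLE (x y : St n) : Prop := ∀ i, x i = 1 → y i = 1

lemma apply_eq_of_eqOn (h : St n → St n) (i : Fin n) {S : Set (Fin n)}
    (hS : ∀ x j, hasEdge h x j i → j ∈ S) {x y : St n} (hxy : ∀ j ∈ S, x j = y j) :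
    h x i = h y i := by
  induction x using flip_induction y with
  | hy => rfl
  | step x j hj ih =>
    have hjS : j ∉ S := fun hj' => hj (hxy j hj')
    have hedge : ¬ hasEdge h x j i := fun he => hjS (hS x j he)
    rw [← not_not.mp hedge]
    exact ih fun k hk => by rw [add_uv_of_ne x (by rintro rfl; exact hjS hk), hxy k hk]

lemma apply_mono_of_edgePos (h : St n → St n) (i : Fin n)
    (hpos : ∀ x j, hasEdge h x j i → x j = h x i) {x y : St n} (hxy : StLE x y)
    (hx : h x i = 1) : h y i = 1 := by
  induction x using flip_induction y with
  | hy => exact hx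
  | step x j hj ih =>
    have hxj : x j = 0 := zmod_two_eq_zero_of_ne_one fun h1 => hj (h1.trans (hxy j h1).symm)
    have hyj : y j = 1 := zmod_two_eq_one_of_ne_zero (hxj ▸ hj).symm
    have hedge : ¬ hasEdge h x j i := fun he => by
      rw [← hpos x j he, hxj] at hx; exact zero_ne_one hx
    refine ih (fun k hk => ?_) (not_not.mp hedge ▸ hx)
    by_cases hkj : k = j
    · exact hkj ▸ hyj
    · exact hxy k (add_uv_of_ne x hkj ▸ hk)

/-- First raise coordinates until `h y ≤ y`, then lower them: monotonicity keeps `h y ≤ y`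
during the descent. -/
lemma exists_reach_fixed_of_monotone (h : St n → St n)
    (hmono : ∀ x y, StLE x y → StLE (h x) (h y)) (x : St n) :
    ∃ z, Reach h x z ∧ h z = z := by
  have hup : ∀ x, True → ¬ StLE (h x) x → ∃ j, h x j ≠ x j ∧ x j ≠ (1 : St n) j ∧ True := by
    intro x _ hx
    simp only [StLE, not_forall] at hx
    obtain ⟨j, hj, hxj⟩ := hx
    exact ⟨j, hj ▸ Ne.symm hxj, hxj, trivial⟩
  have hdown : ∀ y, StLE (h y) y → h y ≠ y →
      ∃ j, h y j ≠ y j ∧ y j ≠ (0 : St n) j ∧ StLE (h (y + uv j)) (y + uv j) := by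
    intro y hy hfix
    obtain ⟨j, hj⟩ := Function.ne_iff.mp hfix
    have hyj : y j = 1 := by
      by_contra hyj
      exact hj (by rw [zmod_two_eq_zero_of_ne_one hyj,
        zmod_two_eq_zero_of_ne_one fun h1 => hyj (hy j h1)])
    have hhj : h y j = 0 := zmod_two_eq_zero_of_ne_one fun h1 => hj (h1.trans hyj.symm)
    have hle : StLE (y + uv j) y := fun k hk => by
      by_cases hkj : k = j
      · exact hkj ▸ hyj
      · exact add_uv_of_ne y hkj ▸ hk
    refine ⟨j, hj, by rw [hyj]; exact one_ne_zero, fun k hk => ?_⟩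
    have hk' := hmono _ _ hle k hk
    by_cases hkj : k = j
    · subst hkj; rw [hhj] at hk'; exact absurd hk' zero_ne_one
    · rw [add_uv_of_ne y hkj]; exact hy k hk'
  obtain ⟨y, hxy, -, hy⟩ := exists_reach_of_descent h 1 hup x trivial
  obtain ⟨z, hyz, -, hz⟩ := exists_reach_of_descent h 0 hdown y hy
  exact ⟨z, hxy.trans hyz, hz⟩

def IsTrap (f : St n → St n) (A : Set (St n)) : Prop :=
  ∀ x ∈ A, ∀ i, f x i ≠ x i → x + uv i ∈ A

lemma IsTrap.mem_of_reach {f : St n → St n} {A : Set (St n)} (hA : IsTrap f A) {x y : St n}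
    (hx : x ∈ A) (h : Reach f x y) : y ∈ A := by
  induction h with
  | refl => exact hx
  | tail _ hstep ih =>
    obtain ⟨i, hi, rfl⟩ := hstep
    exact hA _ ih i hi

lemma IsTrap.reach_of_eqOn {f g : St n → St n} {A : Set (St n)} (hA : IsTrap f A)
    (hfg : ∀ x ∈ A, g x = f x) {x y : St n} (hx : x ∈ A) (h : Reach f x y) : Reach g x y := by
  induction h with
  | refl => exact .refl
  | tail hxy hstep ih =>
    obtain ⟨i, hi, rfl⟩ := hstep
    exact ih.tail ⟨i, hfg _ (hA.mem_of_reach hx hxy) ▸ hi, rfl⟩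

open Classical in
noncomputable def restrictUpdates (S : Set (Fin n)) (h : St n → St n) : St n → St n :=
  fun x i => if i ∈ S then h x i else x i

/-- The positive subnetwork on `S` drives any state of `A` to a state where `S` is fixed, and
from there `S`, having no inputs from outside, never moves again. -/
lemma eqOn_of_forall_edge_pos (h : St n → St n) {A : Set (St n)} (hA : IsTrap h A)
    (hconn : ∀ x ∈ A, ∀ y ∈ A, Reach h x y) (S : Set (Fin n))
    (hS : ∀ x j i, i ∈ S → hasEdge h x j i → j ∈ S ∧ x j = h x i)
    {x y : St n} (hx : x ∈ A) (hy : y ∈ A) {i : Fin n} (hi : i ∈ S) : x i = y i := by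
  have hmono : ∀ x y, StLE x y → StLE (restrictUpdates S h x) (restrictUpdates S h y) := by
    intro x y hxy k hk
    by_cases hkS : k ∈ S
    · simp only [restrictUpdates, if_pos hkS] at hk ⊢
      exact apply_mono_of_edgePos h k (fun z j he => (hS z j k hkS he).2) hxy hk
    · simp only [restrictUpdates, if_neg hkS] at hk ⊢
      exact hxy k hk
  obtain ⟨z, hxz, hz⟩ := exists_reach_fixed_of_monotone _ hmono x
  have hxz' : Reach h x z := Relation.ReflTransGen.mono (fun p q ⟨j, hj, hq⟩ => by
    by_cases hjS : j ∈ S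
    · exact ⟨j, by simpa [restrictUpdates, hjS] using hj, hq⟩
    · exact absurd (if_neg hjS) hj) _ _ hxz
  have hfrozen : ∀ w, Reach h z w → ∀ k ∈ S, w k = z k := by
    intro w hzw
    induction hzw with
    | refl => exact fun _ _ => rfl
    | @tail p q _ hstep ih =>
      obtain ⟨j, hj, rfl⟩ := hstep
      have hjS : j ∉ S := fun hjS => hj <| by
        rw [apply_eq_of_eqOn h j (fun x k he => (hS x k j hjS he).1) ih, ih j hjS]
        simpa [restrictUpdates, hjS] using congrFun hz j
      exact fun k hk => by rw [add_uv_of_ne p (by rintro rfl; exact hjS hk), ih k hk]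
  have hzA : z ∈ A := hA.mem_of_reach hx hxz'
  rw [hfrozen x (hconn z hzA x hx) i hi, hfrozen y (hconn z hzA y hy) i hi]

lemma add_add_cancel_right (x σ : St n) : x + σ + σ = x :=
  funext fun i => CharTwo.add_cancel_right (x i) (σ i)

def switch (σ : St n) (f : St n → St n) : St n → St n := fun x => f (x + σ) + σ

lemma reach_switch {f : St n → St n} (σ : St n) {x y : St n} (h : Reach f x y) :
    Reach (switch σ f) (x + σ) (y + σ) :=
  h.lift (· + σ) fun p q ⟨i, hi, hq⟩ => ⟨i, by
    simpa [switch, add_add_cancel_right] using hi, by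
    rw [hq, add_right_comm]⟩

lemma hasEdge_switch {f : St n → St n} {σ x : St n} {j i : Fin n} :
    hasEdge (switch σ f) x j i ↔ hasEdge f (x + σ) j i := by
  simp only [hasEdge, switch, add_right_comm x (uv j) σ, Pi.add_apply, ne_eq, add_left_inj]

lemma eqOn_of_forall_edge_sign (h : St n → St n) {A : Set (St n)} (hA : IsTrap h A)
    (hconn : ∀ x ∈ A, ∀ y ∈ A, Reach h x y) (S : Set (Fin n)) (σ : St n)
    (hS : ∀ x j i, i ∈ S → hasEdge h x j i → j ∈ S ∧ x j + h x i = σ j + σ i)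
    {x y : St n} (hx : x ∈ A) (hy : y ∈ A) {i : Fin n} (hi : i ∈ S) : x i = y i := by
  have hA' : IsTrap (switch σ h) {x | x + σ ∈ A} := fun x hx i hi => by
    simpa only [Set.mem_ofPred_eq, add_right_comm x (uv i) σ] using
      hA _ hx i fun he => hi <| by simp [switch, he, add_assoc, CharTwo.add_self_eq_zero]
  have hconn' : ∀ x ∈ {x | x + σ ∈ A}, ∀ y ∈ {x | x + σ ∈ A}, Reach (switch σ h) x y :=
    fun x hx y hy => by simpa only [add_add_cancel_right] using reach_switch σ (hconn _ hx _ hy)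
  have hpos : ∀ x j i, i ∈ S → hasEdge (switch σ h) x j i → j ∈ S ∧ x j = switch σ h x i := by
    intro x j i hi he
    obtain ⟨hj, hsign⟩ := hS _ j i hi (hasEdge_switch.mp he)
    refine ⟨hj, ?_⟩
    have key : ∀ a b c d : ZMod 2, a + b + c = b + d → a = c + d := by decide
    exact key _ _ _ _ hsign
  have := eqOn_of_forall_edge_pos _ hA' hconn' S hpos (x := x + σ) (y := y + σ)
    (by simpa [add_add_cancel_right] using hx) (by simpa [add_add_cancel_right] using hy) hi
  simpa using this

/-- `G(f)` has an edge `j → i` of sign `(-1)^s`, i.e. `s = 0` for positive, `s = 1` for negative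
edges. -/
def gEdgeSign (f : St n → St n) (j i : Fin n) (s : ZMod 2) : Prop :=
  ∃ x, hasEdge f x j i ∧ x j + f x i = s

open Classical in
noncomputable def freeze (U : Set (Fin n)) (a x : St n) : St n :=
  fun j => if j ∈ U then x j else a j

lemma freeze_add_uv_of_mem {U : Set (Fin n)} {a x : St n} {j : Fin n} (hj : j ∈ U) :
    freeze U a (x + uv j) = freeze U a x + uv j := by
  funext k
  by_cases hkj : k = j
  · subst hkj; simp [freeze, hj]
  · by_cases hk : k ∈ U <;> simp [freeze, hk, add_uv_of_ne _ hkj]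

lemma freeze_add_uv_of_notMem {U : Set (Fin n)} {a x : St n} {j : Fin n} (hj : j ∉ U) :
    freeze U a (x + uv j) = freeze U a x := by
  funext k
  by_cases hk : k ∈ U
  · simp [freeze, hk, add_uv_of_ne x (show k ≠ j by rintro rfl; exact hj hk)]
  · simp [freeze, hk]

lemma gEdgeSign_freeze {f : St n → St n} {U : Set (Fin n)} {a : St n} {j i : Fin n}
    {s : ZMod 2} (h : gEdgeSign (fun x => freeze U a (f (freeze U a x))) j i s) :
    gEdgeSign f j i s ∧ j ∈ U := by
  obtain ⟨x, he, hs⟩ := h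
  have hi : i ∈ U := by
    by_contra hi
    exact he (by simp [freeze, hi])
  have hj : j ∈ U := by
    by_contra hj
    exact he (by simp only [freeze_add_uv_of_notMem hj])
  simp only [hasEdge, freeze_add_uv_of_mem hj] at he
  simp only [freeze, hi, if_true] at he hs
  exact ⟨⟨freeze U a x, he, by simpa [freeze, hj] using hs⟩, hj⟩

def varyingCoords (A : Set (St n)) (a : St n) : Set (Fin n) := {i | ∃ y ∈ A, y i ≠ a i}

lemma freeze_comp_eq {f : St n → St n} {A : Set (St n)} (hA : IsTrap f A) {a x : St n}
    (hx : x ∈ A) :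
    freeze (varyingCoords A a) a (f (freeze (varyingCoords A a) a x)) = f x := by
  have hconst : ∀ i ∉ varyingCoords A a, ∀ y ∈ A, y i = a i := fun i hi y hy => by
    by_contra h
    exact hi ⟨y, hy, h⟩
  have hxx : freeze (varyingCoords A a) a x = x := by
    funext j
    by_cases hj : j ∈ varyingCoords A a
    · simp only [freeze, if_pos hj]
    · simp only [freeze, if_neg hj, hconst j hj x hx]
  rw [hxx]
  funext i
  by_cases hi : i ∈ varyingCoords A a
  · simp only [freeze, if_pos hi]
  · simp only [freeze, if_neg hi]
    by_contra hfx
    have hmove := hconst i hi _ (hA x hx i (hconst i hi x hx ▸ Ne.symm hfx))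
    rw [add_uv_self, hconst i hi x hx] at hmove
    simp at hmove

lemma exists_negCycle_of_hasOddCycle {f : St n → St n}
    (h : SignedDigraph.HasOddCycle (gEdgeSign f)) :
    ∃ (m : ℕ) (v : Fin (m + 1) → Fin n) (ε : Fin (m + 1) → Bool),
      Function.Injective v ∧
      (∀ k, if ε k then gEdgeNeg f (v k) (v (k + 1)) else gEdgePos f (v k) (v (k + 1))) ∧
      Odd (Nat.card {k : Fin (m + 1) // ε k = true}) := by
  classical
  obtain ⟨m, v, s, hv, hedge, hodd⟩ := h
  refine ⟨m, v, fun k => decide (s k = 1), hv, fun k => ?_, ?_⟩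
  · obtain ⟨x, he, hs⟩ := hedge k
    have hsign : ∀ a b : ZMod 2, (a + b = 1 ↔ a ≠ b) ∧ (a + b = 0 ↔ a = b) := by decide
    by_cases h1 : s k = 1
    · simpa [h1] using ⟨x, he, ((hsign _ _).1.mp (hs.trans h1))⟩
    · simpa [h1] using ⟨x, he, ((hsign _ _).2.mp (hs.trans (zmod_two_eq_zero_of_ne_one h1)))⟩
  · have hs : ∀ k, s k = if s k = 1 then 1 else 0 := fun k => by
      by_cases h1 : s k = 1
      · simp [h1]
      · simp [zmod_two_eq_zero_of_ne_one h1]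
    rw [Finset.sum_congr rfl fun k _ => hs k, Finset.sum_boole] at hodd
    rw [Nat.card_eq_fintype_card, Fintype.card_subtype, ← ZMod.natCast_eq_one_iff_odd]
    simpa using hodd

end BooleanNetwork

open BooleanNetwork SignedDigraph

/-- If a Boolean network has a cyclic attractor (in particular if it has no fixed
point), then its global interaction graph `G(f)` has a negative cycle: an elementary
directed cycle together with a choice of a sign for each edge (realized in `G(f)`),
with an odd number of negative edges. -/
theorem stmt_16 (n : ℕ) (f : St n → St n)
    (hattr : ∃ A : Set (St n), IsCyclicAttractor f A) :
    ∃ (m : ℕ) (v : Fin (m + 1) → Fin n) (ε : Fin (m + 1) → Bool),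
      Function.Injective v ∧
      (∀ k, if ε k then gEdgeNeg f (v k) (v (k + 1)) else gEdgePos f (v k) (v (k + 1))) ∧
      Odd (Nat.card {k : Fin (m + 1) // ε k = true}) := by
  refine exists_negCycle_of_hasOddCycle (by_contra fun hf => ?_)
  obtain ⟨A, ⟨a, ha⟩, hA, hconn, hsingle⟩ := hattr
  replace hA : IsTrap f A := hA
  let U := varyingCoords A a
  let g : St n → St n := fun x => freeze U a (f (freeze U a x))
  have hgf : ∀ x ∈ A, g x = f x := fun x hx => freeze_comp_eq hA hx
  have hgA : IsTrap g A := fun x hx i hi => hA x hx i (hgf x hx ▸ hi)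
  obtain ⟨y, hy, u, hu⟩ : ∃ y ∈ A, ∃ u, y u ≠ a u := by
    by_contra! hall
    exact hsingle ⟨a, Set.eq_singleton_iff_unique_mem.mpr ⟨ha, fun y hy => funext (hall y hy)⟩⟩
  let E := Adj (gEdgeSign g)
  obtain ⟨v, hvu, hv⟩ := exists_initial_ancestor E u
  have hvU : v ∈ U := by
    rcases hvu.cases_head with rfl | ⟨w, ⟨s, hvw⟩, -⟩
    · exact ⟨y, hy, hu⟩
    · exact (gEdgeSign_freeze hvw).2
  obtain ⟨σ, hσ⟩ :=
    exists_potential (fun hg => hf (hg.mono fun _ _ _ h => (gEdgeSign_freeze h).1)) v hv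
  have hS : ∀ x j i, i ∈ {i | Relation.ReflTransGen E i v} → hasEdge g x j i →
      j ∈ {i | Relation.ReflTransGen E i v} ∧ x j + g x i = σ j + σ i :=
    fun x j i hi he => ⟨.head ⟨_, x, he, rfl⟩ hi, hσ j i _ hi ⟨x, he, rfl⟩⟩
  obtain ⟨z, hz, hzv⟩ := hvU
  exact hzv (eqOn_of_forall_edge_sign g hgA
    (fun x hx y hy => hA.reach_of_eqOn hgf hx (hconn x hx y hy)) _ σ hS hz ha .refl)
end

section
/- Let f : F_2^n → F_2^n be an and-net that has an antipodal attractive cycle. Then G(f) has a local negative cycle, i.e., there exists x ∈ F_2^n such that the local interaction graph G(f)(x) contains a negative cycle. -/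
/-- The antipode `x̄` of a state `x`. -/
def antipode {n : ℕ} (x : St n) : St n := fun i => x i + 1

/-- `f` has an antipodal attractive cycle
`(x^0, x^1, …, x^n = x̄^0, x̄^1, …, x̄^n = x^0)`: there is a permutation `σ` and points
`x^0, …, x^n` with `x^i = x^{i-1} + e^{σ(i)} = f(x^{i-1})` and `f(x̄^{i-1}) = x̄^i`.
Every point of the cycle has exactly one degree of freedom, so it is an attractive cycle
(in particular `d(x^0, f(x^0)) = 1`). -/
def HasAntipodalAttractiveCycle {n : ℕ} (f : St n → St n) : Prop :=
  ∃ (x : ℕ → St n) (σ : Equiv.Perm (Fin n)),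
    (∀ i : Fin n, x (i.val + 1) = x i.val + uv (σ i)) ∧
    (∀ i : Fin n, f (x i.val) = x (i.val + 1)) ∧
    (∀ i : Fin n, f (antipode (x i.val)) = antipode (x (i.val + 1))) ∧
    hammingDist (x 0) (f (x 0)) = 1

lemma zmod2_cases : ∀ a : ZMod 2, a = 0 ∨ a = 1 := by decide

lemma uv_apply {n : ℕ} (j i : Fin n) : uv j i = if i = j then 1 else 0 := rfl

lemma uv_iff {n : ℕ} {a c b d : Fin n} (h : uv a c = uv b d) : (c = a ↔ d = b) := by
  rw [uv_apply, uv_apply] at h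
  by_cases h1 : c = a <;> by_cases h2 : d = b
  · exact ⟨fun _ => h2, fun _ => h1⟩
  · rw [if_pos h1, if_neg h2] at h; exact absurd h (by decide)
  · rw [if_neg h1, if_pos h2] at h; exact absurd h.symm (by decide)
  · exact ⟨fun hh => absurd hh h1, fun hh => absurd hh h2⟩

/-- If an and-net has an antipodal attractive cycle, then it has a local negative
cycle. -/
theorem stmt_18 (n : ℕ) (f : St n → St n) (hand : IsAndNet f)
    (hcyc : HasAntipodalAttractiveCycle f) :
    ∃ x, hasNegCycleAt f x := by
  classical
  cases n with
  | zero =>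
      exfalso
      obtain ⟨x, σ, -, -, -, h4⟩ := hcyc
      have := hammingDist_le_card_fintype (x := x 0) (y := f (x 0))
      simp [h4] at this
  | succ n =>
  obtain ⟨x, σ, h1, h2, h3, -⟩ := hcyc
  have h1' : ∀ (k : ℕ) (hk : k < n + 1), x (k + 1) = x k + uv (σ ⟨k, hk⟩) :=
    fun k hk => h1 ⟨k, hk⟩
  have h2' : ∀ (k : ℕ), k < n + 1 → f (x k) = x (k + 1) := fun k hk => h2 ⟨k, hk⟩
  have h3' : ∀ (k : ℕ), k < n + 1 → f (antipode (x k)) = antipode (x (k + 1)) :=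
    fun k hk => h3 ⟨k, hk⟩
  -- description of the trajectory
  have hx : ∀ k : ℕ, k ≤ n + 1 → ∀ j, x k j =
      x 0 j + (if (σ.symm j).val < k then 1 else 0) := by
    intro k
    induction k with
    | zero => intro _ j; simp
    | succ k ih =>
        intro hk j
        have hk' : k ≤ n + 1 := by omega
        have hkn : k < n + 1 := by omega
        have e : x (k + 1) j = x k j + uv (σ ⟨k, hkn⟩) j := congrFun (h1' k hkn) j
        rw [e, ih hk' j, uv_apply]
        have hiff : (j = σ ⟨k, hkn⟩) ↔ (σ.symm j).val = k := by
          rw [← σ.symm_apply_eq]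
          constructor
          · intro h; rw [h]
          · intro h; exact Fin.ext h
        by_cases hc : (σ.symm j).val = k
        · rw [if_pos (hiff.mpr hc), if_neg (by omega), if_pos (by omega)]; ring
        · rw [if_neg (fun h => hc (hiff.mp h))]
          by_cases hlt : (σ.symm j).val < k
          · rw [if_pos hlt, if_pos (by omega)]; ring
          · rw [if_neg hlt, if_neg (by omega)]; ring
  have hxn : x (n + 1) = antipode (x 0) := by
    funext j
    rw [hx (n + 1) le_rfl j, if_pos (σ.symm j).isLt]
    rfl
  have hanti : ∀ y : St (n + 1), antipode (antipode y) = y := by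
    intro y; funext j
    show y j + 1 + 1 = y j
    have : ∀ a : ZMod 2, a + 1 + 1 = a := by decide
    exact this _
  -- the key "exactly one of antipodal pair" property
  have hQ : ∀ k : ℕ, k ≤ n + 1 → ∀ i, f (x k) i + f (antipode (x k)) i = 1 := by
    intro k hk i
    rcases Nat.lt_or_ge k (n + 1) with hlt | hge
    · rw [congrFun (h2' k hlt) i, congrFun (h3' k hlt) i]
      show x (k + 1) i + (x (k + 1) i + 1) = 1
      have : ∀ a : ZMod 2, a + (a + 1) = 1 := by decide
      exact this _
    · have hkeq : k = n + 1 := le_antisymm hk hge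
      subst hkeq
      rw [hxn, hanti (x 0), congrFun (h3' 0 (by omega)) i, congrFun (h2' 0 (by omega)) i]
      show x (0 + 1) i + 1 + x (0 + 1) i = 1
      have : ∀ a : ZMod 2, a + 1 + a = 1 := by decide
      exact this _
  -- each coordinate function is a single literal
  have hlit : ∀ i, ∃ (j : Fin (n + 1)) (ε : ZMod 2), ∀ w, f w i = w j + ε := by
    intro i
    obtain ⟨P, N, hdisj, hform⟩ := hand i
    set L : Fin (n + 1) → ZMod 2 := fun j => if j ∈ P then 1 else 0 with hL
    have hone : ∀ w, f w i = 1 → ∀ j ∈ P ∪ N, w j = L j := by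
      intro w hw j hj
      rw [hform] at hw
      rcases Finset.mem_union.mp hj with hjP | hjN
      · rw [hL]; simp only [if_pos hjP]
        rcases zmod2_cases (w j) with h0 | h1
        · exfalso
          rw [Finset.prod_eq_zero hjP h0, zero_mul] at hw
          exact absurd hw (by decide)
        · exact h1
      · rw [hL]; simp only [if_neg (Finset.disjoint_right.mp hdisj hjN)]
        rcases zmod2_cases (w j) with h0 | h1
        · exact h0
        · exfalso
          have hz : w j + 1 = 0 := by rw [h1]; decide
          rw [Finset.prod_eq_zero hjN hz, mul_zero] at hw
          exact absurd hw (by decide)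
    have hOr : ∀ k : ℕ, k ≤ n + 1 → f (x k) i = 1 ∨ f (antipode (x k)) i = 1 := by
      intro k hk
      have h := hQ k hk i
      have key : ∀ a b : ZMod 2, a + b = 1 → a = 1 ∨ b = 1 := by decide
      exact key _ _ h
    have hval : ∀ k : ℕ, k ≤ n + 1 → ∀ j ∈ P ∪ N, ∀ j' ∈ P ∪ N,
        x k j + x k j' = L j + L j' := by
      intro k hk j hj j' hj'
      rcases hOr k hk with h | h
      · rw [hone _ h j hj, hone _ h j' hj']
      · have b1 : x k j + 1 = L j := hone _ h j hj
        have b2 : x k j' + 1 = L j' := hone _ h j' hj'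
        have key : ∀ a b c d : ZMod 2, a + 1 = c → b + 1 = d → a + b = c + d := by decide
        exact key _ _ _ _ b1 b2
    have hne : (P ∪ N).Nonempty := by
      by_contra hno
      rw [Finset.not_nonempty_iff_eq_empty, Finset.union_eq_empty] at hno
      have hconst : ∀ w, f w i = 1 := by
        intro w; rw [hform, hno.1, hno.2]; simp
      have h := hQ 0 (by omega) i
      rw [hconst (x 0), hconst (antipode (x 0))] at h
      exact absurd h (by decide)
    obtain ⟨j, hj⟩ := hne
    have huniq : ∀ j' ∈ P ∪ N, j' = j := by
      intro j' hj'
      by_contra hjj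
      set k : Fin (n + 1) := σ.symm j with hkdef
      have hσk : σ k = j := σ.apply_symm_apply j
      have e1 := hval k.val (le_of_lt k.isLt) j hj j' hj'
      have e2 := hval (k.val + 1) k.isLt j hj j' hj'
      have estep : x (k.val + 1) = x k.val + uv j := by
        rw [← hσk]; exact h1 k
      have v1 : x (k.val + 1) j = x k.val j + 1 := by
        rw [estep]; show x k.val j + uv j j = _; rw [uv_apply, if_pos rfl]
      have v2 : x (k.val + 1) j' = x k.val j' := by
        rw [estep]; show x k.val j' + uv j j' = _; rw [uv_apply, if_neg hjj, add_zero]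
      rw [v1, v2] at e2
      have key : ∀ a b c : ZMod 2, a + 1 + b = c → a + b = c → False := by decide
      exact key _ _ _ e2 e1
    rcases Finset.mem_union.mp hj with hjP | hjN
    · have hN : N = ∅ := by
        rw [Finset.eq_empty_iff_forall_notMem]
        intro a ha
        have haj := huniq a (Finset.mem_union_right _ ha)
        subst haj
        exact Finset.disjoint_left.mp hdisj hjP ha
      have hP : P = {j} := Finset.eq_singleton_iff_unique_mem.mpr
        ⟨hjP, fun a ha => huniq a (Finset.mem_union_left _ ha)⟩
      exact ⟨j, 0, fun w => by rw [hform, hP, hN]; simp⟩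
    · have hP : P = ∅ := by
        rw [Finset.eq_empty_iff_forall_notMem]
        intro a ha
        have haj := huniq a (Finset.mem_union_left _ ha)
        subst haj
        exact Finset.disjoint_left.mp hdisj ha hjN
      have hN : N = {j} := Finset.eq_singleton_iff_unique_mem.mpr
        ⟨hjN, fun a ha => huniq a (Finset.mem_union_right _ ha)⟩
      exact ⟨j, 1, fun w => by rw [hform, hP, hN]; simp⟩
  choose τ ε hτ using hlit
  -- the basic equation
  have hE : ∀ (k' : Fin (n + 1)) (i : Fin (n + 1)),
      uv (σ k') i = x k'.val (τ i) + ε i + x k'.val i := by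
    intro k' i
    have e2 := congrFun (h2 k') i
    rw [hτ] at e2
    have e1 : x (k'.val + 1) i = x k'.val i + uv (σ k') i := congrFun (h1 k') i
    rw [e1] at e2
    have key : ∀ a e b u : ZMod 2, a + e = b + u → u = a + e + b := by decide
    exact key _ _ _ _ e2
  -- the literal of σ(k+1) is σ(k)
  have hT : ∀ k : Fin (n + 1), τ (σ (k + 1)) = σ k := by
    intro k
    set i := σ (k + 1) with hi
    set b := σ.symm (τ i) with hb
    have hσb : σ b = τ i := σ.apply_symm_apply _
    suffices hbk : b = k by rw [← hσb, hbk]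
    have key : ∀ (k' : Fin (n + 1)) (hlt : k'.val + 1 < n + 1),
        ((⟨k'.val + 1, hlt⟩ : Fin (n + 1)) = k + 1 ↔ k' = b) := by
      intro k' hlt
      set k'' : Fin (n + 1) := ⟨k'.val + 1, hlt⟩ with hk''
      have eA := hE k' i
      have eB := hE k'' i
      have eτ : x k''.val (τ i) = x k'.val (τ i) + uv (σ k') (τ i) :=
        congrFun (h1 k') (τ i)
      have ei : x k''.val i = x k'.val i + uv (σ k') i := congrFun (h1 k') i
      rw [eτ, ei] at eB
      have huv : uv (σ k'') i = uv (σ k') (τ i) := by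
        have key2 : ∀ (A U e B P Q : ZMod 2), Q = A + U + e + (B + P) → Q + P = U + (A + e + B) := by decide
        have h5 := key2 _ _ _ _ _ _ eB
        rw [← eA] at h5
        have key3 : ∀ (Q P U : ZMod 2), Q + P = U + P → Q = U := by decide
        exact key3 _ _ _ h5
      have hiff := uv_iff huv
      constructor
      · intro h
        have h6 : i = σ k'' := by rw [hi, h]
        have h7 : τ i = σ k' := hiff.mp h6
        rw [hb, h7, Equiv.symm_apply_apply]
      · intro h
        have h7 : τ i = σ k' := by rw [h, hσb]
        have h6 : i = σ k'' := hiff.mpr h7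
        exact σ.injective (h6.symm.trans hi)
    by_cases hk : k.val + 1 < n + 1
    · have hval : ((k + 1 : Fin (n + 1))).val = k.val + 1 := by
        rw [Fin.val_add_one]
        rw [if_neg (by intro hh; rw [hh] at hk; simp [Fin.last] at hk)]
      exact ((key k hk).mp (Fin.ext (by rw [hval]))).symm
    · have hkn : k.val = n := by have := k.isLt; omega
      have hwrap : ((k + 1 : Fin (n + 1))).val = 0 := by
        rw [Fin.val_add_one, if_pos (Fin.ext (by simp [Fin.last, hkn]))]
      by_contra hbk
      have hblt : b.val + 1 < n + 1 := by
        rcases Nat.lt_or_ge b.val n with h | h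
        · omega
        · exfalso
          exact hbk (Fin.ext (by have := b.isLt; omega))
      have h8 := (key b hblt).mpr rfl
      have h9 : b.val + 1 = ((k + 1 : Fin (n + 1))).val := by rw [← h8]
      rw [hwrap] at h9
      omega
  -- edges exist everywhere
  have hedge : ∀ (y : St (n + 1)) (k : Fin (n + 1)), hasEdge f y (σ k) (σ (k + 1)) := by
    intro y k
    unfold hasEdge
    rw [hτ, hτ, hT]
    have happ : (y + uv (σ k)) (σ k) = y (σ k) + 1 := by
      show y (σ k) + uv (σ k) (σ k) = y (σ k) + 1
      rw [uv_apply, if_pos rfl]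
    rw [happ]
    have : ∀ a e : ZMod 2, a + 1 + e ≠ a + e := by decide
    exact this _ _
  -- assemble the negative cycle at x 0
  refine ⟨x 0, n, ⇑σ, σ.injective, fun k => hedge (x 0) k, ?_⟩
  have hf0 : ∀ k : Fin (n + 1), f (x 0) (σ (k + 1)) = x 0 (σ k) + ε (σ (k + 1)) := by
    intro k; rw [hτ, hT]
  have hp : ∀ k : Fin (n + 1),
      edgeNeg f (x 0) (σ k) (σ (k + 1)) ↔ ε (σ (k + 1)) = 1 := by
    intro k
    constructor
    · rintro ⟨-, hne2⟩
      rw [hf0 k] at hne2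
      have key : ∀ a e : ZMod 2, a ≠ a + e → e = 1 := by decide
      exact key _ _ hne2
    · intro hε
      refine ⟨hedge _ _, ?_⟩
      rw [hf0 k, hε]
      have : ∀ a : ZMod 2, a ≠ a + 1 := by decide
      exact this _
  have hcard : Nat.card {k : Fin (n + 1) // edgeNeg f (x 0) (σ k) (σ (k + 1))} =
      (Finset.univ.filter (fun k : Fin (n + 1) => ε (σ (k + 1)) = 1)).card := by
    rw [Nat.card_congr (Equiv.subtypeEquivRight hp), Nat.card_eq_fintype_card,
      Fintype.card_subtype]
  have hsum : ((Finset.univ.filter (fun k : Fin (n + 1) => ε (σ (k + 1)) = 1)).card : ZMod 2) =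
      ∑ k : Fin (n + 1), ε (σ (k + 1)) := by
    rw [Finset.card_eq_sum_ones, Nat.cast_sum, Finset.sum_filter]
    apply Finset.sum_congr rfl
    intro k _
    by_cases h : ε (σ (k + 1)) = 1
    · rw [if_pos h, h]; simp
    · rw [if_neg h]
      rcases zmod2_cases (ε (σ (k + 1))) with h0 | h1
      · rw [h0]
      · exact absurd h1 h
  have hsplit : ∀ k : Fin (n + 1), ε (σ (k + 1)) =
      x 0 (σ (k + 1)) + uv (σ ⟨0, by omega⟩) (σ (k + 1)) + x 0 (σ k) := by
    intro k
    have hf2 : f (x 0) (σ (k + 1)) =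
        x 0 (σ (k + 1)) + uv (σ ⟨0, by omega⟩) (σ (k + 1)) := by
      rw [congrFun (h2' 0 (by omega)) (σ (k + 1))]
      exact congrFun (h1' 0 (by omega)) (σ (k + 1))
    have hcomb := (hf0 k).symm.trans hf2
    have key : ∀ c e a u : ZMod 2, c + e = a + u → e = a + u + c := by decide
    exact key _ _ _ _ hcomb
  have hsum1 : ∑ k : Fin (n + 1), ε (σ (k + 1)) = 1 := by
    rw [Finset.sum_congr rfl (fun k _ => hsplit k), Finset.sum_add_distrib,
      Finset.sum_add_distrib]
    have e1 : ∑ k : Fin (n + 1), x 0 (σ (k + 1)) = ∑ i, x 0 i :=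
      Equiv.sum_comp ((Equiv.addRight (1 : Fin (n + 1))).trans σ) (fun i => x 0 i)
    have e2 : ∑ k : Fin (n + 1), uv (σ ⟨0, by omega⟩) (σ (k + 1)) =
        ∑ i, uv (σ ⟨0, by omega⟩) i :=
      Equiv.sum_comp ((Equiv.addRight (1 : Fin (n + 1))).trans σ) _
    have e3 : ∑ k : Fin (n + 1), x 0 (σ k) = ∑ i, x 0 i :=
      Equiv.sum_comp σ (fun i => x 0 i)
    rw [e1, e2, e3]
    have e4 : ∑ i, uv (σ (⟨0, by omega⟩ : Fin (n + 1))) i = 1 := by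
      simp [uv_apply]
    rw [e4]
    have : ∀ a : ZMod 2, a + 1 + a = 1 := by decide
    exact this _
  rw [hcard]
  have hfin : (((Finset.univ.filter
      (fun k : Fin (n + 1) => ε (σ (k + 1)) = 1)).card : ℕ) : ZMod 2) = 1 :=
    hsum.trans hsum1
  rw [Nat.odd_iff]
  by_contra hodd
  have heven : 2 ∣ (Finset.univ.filter (fun k : Fin (n + 1) => ε (σ (k + 1)) = 1)).card := by
    omega
  obtain ⟨m, hm⟩ := heven
  rw [hm] at hfin
  push_cast at hfin
  rw [show ((2 : ZMod 2)) = 0 by decide, zero_mul] at hfin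
  exact absurd hfin (by decide)
end
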